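/- Let R be a ring and let f : C → D be a chain map of nonnegatively graded chain complexes of finitely generated free R-modules such that f_0 : C_0 → D_0 is an isomorphism, H_0(f) : H_0(C) → H_0(D) is bijective, and H_1(f) : H_1(C) → H_1(D) is surjective. Then there exist nonnegatively graded chain complexes C', D' of finitely generated free R-modules with C'_n = C_n and D'_n = D_n for n = 0 and for all n ≥ 3, chain homotopy equivalences a : C → C' and b : D → D' which are isomorphisms in degree 0 and equal the identity in degrees n ≥ 3, and a chain map f' : C' → D' whose components f'_0 and f'_1 are isomorphisms, such that f' ∘ a is chain homotopic to b ∘ f. -/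

import Mathlib

/-!
Enlarge both complexes by a cancelling pair in degrees 2 and 1: `D' = D ⊕ (C₁ → C₁)` and
`C' = C ⊕ (D₁ → D₁)`, with identity differential on the added pair, except that the
differentials of `C'` are twisted to `d(x, y) = d x + g y` and `d(x, y) = (d x + s y, y)`, where
`g = f₀⁻¹ ∘ d : D₁ → C₀` and `d ∘ s = -g`. The twist is undone by `(x, y) ↦ (x - s y, y)`, so
`C'` is still homotopy equivalent to `C`, and now `f'₁(x, y) = (f x + y, x)` is an isomorphism
`C₁ ⊕ D₁ ≅ D₁ ⊕ C₁`. It extends to a chain map as soon as `f ∘ s + id = d ∘ p` for some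
`p : D₁ → D₂`. Since `D₁` is projective, `s` and `p` only have to be found pointwise: injectivity
of `H₀(f)` makes `-g y` a boundary `d x₀`, and surjectivity of `H₁(f)` corrects `x₀` by a cycle
so that the cycle `f x₀ + y` becomes a boundary.
-/

open CategoryTheory

universe v

theorem Module.exists_comp_eq_of_range_le {R P M N : Type*} [Semiring R] [AddCommMonoid P]
    [AddCommMonoid M] [AddCommMonoid N] [Module R P] [Module R M] [Module R N]
    [Module.Projective R P] (f : M →ₗ[R] N) (g : P →ₗ[R] N)
    (h : LinearMap.range g ≤ LinearMap.range f) : ∃ σ : P →ₗ[R] M, f ∘ₗ σ = g := by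
  obtain ⟨σ, hσ⟩ := Module.projective_lifting_property f.rangeRestrict
    (g.codRestrict _ fun y => h ⟨y, rfl⟩) f.surjective_rangeRestrict
  exact ⟨σ, LinearMap.ext fun y => congrArg Subtype.val (LinearMap.congr_fun hσ y)⟩

namespace HomologicalComplex

variable {R : Type*} [Ring R] {ι : Type*} {c : ComplexShape ι}
  {K L : HomologicalComplex (ModuleCat R) c}

lemma d_comp_d_apply (K : HomologicalComplex (ModuleCat R) c) (i j k : ι) (x : K.X i) :
    K.d j k (K.d i j x) = 0 :=
  ConcreteCategory.congr_hom (K.d_comp_d i j k) x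

lemma Hom.comm_apply (f : K ⟶ L) (i j : ι) (x : K.X i) : L.d i j (f.f i x) = f.f j (K.d i j x) :=
  ConcreteCategory.congr_hom (f.comm i j) x

lemma exists_iCycles_eq (K : HomologicalComplex (ModuleCat R) c) {j k : ι} (hk : c.next j = k)
    {x : K.X j} (hx : K.d j k x = 0) : ∃ z, K.iCycles j z = x := by
  subst hk
  exact ⟨(K.sc j).moduleCatCyclesIso.inv ⟨x, hx⟩,
    (K.sc j).moduleCatCyclesIso_inv_iCycles_apply _⟩

lemma exists_toCycles_eq_of_homologyπ_eq_zero (K : HomologicalComplex (ModuleCat R) c)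
    {i j : ι} (hi : c.prev j = i) {z : K.cycles j} (hz : K.homologyπ j z = 0) :
    ∃ b, K.toCycles i j b = z :=
  (ShortComplex.moduleCat_exact_iff _).1
    (ShortComplex.exact_of_g_is_cokernel (.mk (K.toCycles i j) _ (K.toCycles_comp_homologyπ i j))
      (K.homologyIsCokernel i j hi)) z hz

variable (f : K ⟶ L) {i j k : ι} (hi : c.prev j = i) (hk : c.next j = k)
include hi hk

lemma exists_d_eq_of_injective_homologyMap (hf : Function.Injective (homologyMap f j))
    {x : K.X j} (hx : K.d j k x = 0) {u : L.X i} (hu : L.d i j u = f.f j x) :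
    ∃ w, K.d i j w = x := by
  obtain ⟨z, rfl⟩ := K.exists_iCycles_eq hk hx
  have hcycles : cyclesMap f j z = L.toCycles i j u :=
    (ModuleCat.mono_iff_injective (L.iCycles j)).1 inferInstance <| by
      rw [← ConcreteCategory.comp_apply, cyclesMap_i, ← ConcreteCategory.comp_apply,
        toCycles_i, ConcreteCategory.comp_apply, hu]
  have hπ : K.homologyπ j z = 0 := hf <| by
    rw [map_zero, ← ConcreteCategory.comp_apply, homologyπ_naturality,
      ConcreteCategory.comp_apply, hcycles, ← ConcreteCategory.comp_apply,
      toCycles_comp_homologyπ]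
    rfl
  obtain ⟨w, rfl⟩ := K.exists_toCycles_eq_of_homologyπ_eq_zero hi hπ
  exact ⟨w, by rw [← ConcreteCategory.comp_apply, toCycles_i]⟩

lemma exists_d_eq_sub_of_surjective_homologyMap (hf : Function.Surjective (homologyMap f j))
    {y : L.X j} (hy : L.d j k y = 0) : ∃ x, K.d j k x = 0 ∧ ∃ u, L.d i j u = f.f j x - y := by
  obtain ⟨y, rfl⟩ := L.exists_iCycles_eq hk hy
  obtain ⟨h, hh⟩ := hf (L.homologyπ j y)
  obtain ⟨z, rfl⟩ := (ModuleCat.epi_iff_surjective (K.homologyπ j)).1 inferInstance h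
  have hπ : L.homologyπ j (cyclesMap f j z - y) = 0 := by
    rw [map_sub, ← ConcreteCategory.comp_apply, ← homologyπ_naturality,
      ConcreteCategory.comp_apply, hh, sub_self]
  obtain ⟨u, hu⟩ := L.exists_toCycles_eq_of_homologyπ_eq_zero hi hπ
  refine ⟨K.iCycles j z, by rw [← ConcreteCategory.comp_apply, iCycles_d]; rfl, u, ?_⟩
  rw [← toCycles_i, ConcreteCategory.comp_apply, hu, map_sub, ← ConcreteCategory.comp_apply,
    cyclesMap_i, ConcreteCategory.comp_apply]

end HomologicalComplex

namespace ChainComplex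

open HomologicalComplex

section Homotopy
variable {V : Type*} [Category V] [Preadditive V] {P Q : ChainComplex V ℕ}

/-- A homotopy whose only nonzero component is `h : P.X 1 ⟶ Q.X 2`. -/
def homotopyOfOneTwo {e e' : P ⟶ Q} (h : P.X 1 ⟶ Q.X 2) (h₀ : e.f 0 = e'.f 0)
    (h₁ : e.f 1 = h ≫ Q.d 2 1 + e'.f 1) (h₂ : e.f 2 = P.d 2 1 ≫ h + e'.f 2)
    (h₃ : ∀ n, e.f (n + 3) = e'.f (n + 3)) : Homotopy e e' where
  hom
    | 1, 2 => h
    | _, _ => 0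
  zero i j hij := by
    match i, j with
    | 1, 2 => exact absurd rfl hij
    | 0, _ | 1, 0 | 1, 1 | 1, _ + 3 | _ + 2, _ => rfl
  comm
    | 0 => by
      rw [Homotopy.dNext_zero_chainComplex, Homotopy.prevD_chainComplex]
      simpa using h₀
    | 1 => by
      rw [Homotopy.dNext_succ_chainComplex, Homotopy.prevD_chainComplex]
      simpa using h₁
    | 2 => by
      rw [Homotopy.dNext_succ_chainComplex, Homotopy.prevD_chainComplex]
      simpa using h₂
    | n + 3 => by
      rw [Homotopy.dNext_succ_chainComplex, Homotopy.prevD_chainComplex]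
      simpa using h₃ n

end Homotopy

variable {R : Type*} [Ring R]

section Expansion

variable (C : ChainComplex (ModuleCat.{v} R) ℕ) (M : ModuleCat.{v} R)

def expansionX : ℕ → ModuleCat R
  | 0 => C.X 0
  | 1 => .of R (C.X 1 × M)
  | 2 => .of R (C.X 2 × M)
  | n + 3 => C.X (n + 3)

variable {M} (g : M →ₗ[R] C.X 0) (s : M →ₗ[R] C.X 1)

def expansionD : ∀ n, expansionX C M (n + 1) ⟶ expansionX C M n
  | 0 => ModuleCat.ofHom ((C.d 1 0).hom.coprod g)
  | 1 => ModuleCat.ofHom (((C.d 2 1).hom.coprod s).prod (LinearMap.snd R _ _))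
  | 2 => ModuleCat.ofHom (LinearMap.inl R _ _ ∘ₗ (C.d 3 2).hom)
  | n + 3 => C.d (n + 4) (n + 3)

variable {C g s} (hs : ∀ y, C.d 1 0 (s y) = -g y)
include hs

lemma expansionD_comp_expansionD : ∀ n, expansionD C g s (n + 1) ≫ expansionD C g s n = 0
  | 0 => by
    ext ⟨x, y⟩
    show C.d 1 0 (C.d 2 1 x + s y) + g y = 0
    simp [d_comp_d_apply, hs]
  | 1 => by
    ext x
    show ((C.d 2 1 (C.d 3 2 x) + s 0, 0) : C.X 1 × M) = 0
    simpa using C.d_comp_d_apply 3 2 1 x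
  | 2 => by
    ext x
    show ((C.d 3 2 (C.d 4 3 x), 0) : C.X 2 × M) = 0
    simpa using C.d_comp_d_apply 4 3 2 x
  | n + 3 => C.d_comp_d _ _ _

variable (C g s)

def expansion : ChainComplex (ModuleCat R) ℕ :=
  ChainComplex.of (expansionX C M) (expansionD C g s) (expansionD_comp_expansionD hs)

lemma expansion_d (n : ℕ) : (expansion C g s hs).d (n + 1) n = expansionD C g s n :=
  ChainComplex.of_d _ _ _

def expansionIncl : C ⟶ expansion C g s hs where
  f
    | 0 => 𝟙 _
    | 1 => ModuleCat.ofHom (LinearMap.inl R _ _)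
    | 2 => ModuleCat.ofHom (LinearMap.inl R _ _)
    | n + 3 => 𝟙 _
  comm' := by
    rintro _ n rfl
    rw [expansion_d]
    match n with
    | 0 =>
      ext x
      show C.d 1 0 x + g 0 = C.d 1 0 x
      simp
    | 1 =>
      ext x
      show ((C.d 2 1 x + s 0, 0) : C.X 1 × M) = (C.d 2 1 x, 0)
      simp
    | 2 | n + 3 => rfl

def expansionProj : expansion C g s hs ⟶ C where
  f
    | 0 => 𝟙 _
    | 1 => ModuleCat.ofHom (LinearMap.fst R _ _ - s ∘ₗ LinearMap.snd R _ _)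
    | 2 => ModuleCat.ofHom (LinearMap.fst R _ _)
    | n + 3 => 𝟙 _
  comm' := by
    rintro _ n rfl
    rw [expansion_d]
    match n with
    | 0 =>
      ext ⟨x, y⟩
      show C.d 1 0 (x - s y) = C.d 1 0 x + g y
      simp [hs]
    | 1 =>
      ext ⟨x, y⟩
      show C.d 2 1 x = C.d 2 1 x + s y - s y
      simp
    | 2 | n + 3 => rfl

lemma expansionIncl_comp_expansionProj : expansionIncl C g s hs ≫ expansionProj C g s hs = 𝟙 C := by
  ext n x
  match n with
  | 0 | 2 | n + 3 => rfl
  | 1 =>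
    show x - s 0 = x
    simp

def expansionProjInclHomotopy : Homotopy (expansionProj C g s hs ≫ expansionIncl C g s hs) (𝟙 _) :=
  homotopyOfOneTwo (ModuleCat.ofHom (LinearMap.inr R _ _ ∘ₗ (-LinearMap.snd R _ _))) rfl
    (by
      ext ⟨x, y⟩
      show ((x - s y, 0) : C.X 1 × M) = (C.d 2 1 0 + s (-y), -y) + (x, y)
      simp [sub_eq_add_neg, add_comm])
    (by
      ext ⟨x, y⟩
      show ((x, 0) : C.X 2 × M) = (0, -y) + (x, y)
      simp)
    (fun _ => rfl)

def expansionHomotopyEquiv : HomotopyEquiv C (expansion C g s hs) where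
  hom := expansionIncl C g s hs
  inv := expansionProj C g s hs
  homotopyHomInvId := .ofEq (expansionIncl_comp_expansionProj C g s hs)
  homotopyInvHomId := expansionProjInclHomotopy C g s hs

lemma expansion_X_of_three_le {n : ℕ} (hn : 3 ≤ n) : (expansion C g s hs).X n = C.X n := by
  obtain ⟨n, rfl⟩ := Nat.exists_eq_add_of_le' hn
  rfl

lemma expansionIncl_f_of_three_le {n : ℕ} (hn : 3 ≤ n) :
    (expansionIncl C g s hs).f n = eqToHom (expansion_X_of_three_le C g s hs hn).symm := by
  obtain ⟨n, rfl⟩ := Nat.exists_eq_add_of_le' hn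
  rfl

lemma expansion_X_free (hC : ∀ n, Module.Free R (C.X n)) [Module.Free R M] (n : ℕ) :
    Module.Free R ((expansion C g s hs).X n) :=
  match n with
  | 0 => hC 0
  | 1 => have := hC 1; inferInstanceAs (Module.Free R (C.X 1 × M))
  | 2 => have := hC 2; inferInstanceAs (Module.Free R (C.X 2 × M))
  | n + 3 => hC (n + 3)

lemma expansion_X_finite (hC : ∀ n, Module.Finite R (C.X n)) [Module.Finite R M] (n : ℕ) :
    Module.Finite R ((expansion C g s hs).X n) :=
  match n with
  | 0 => hC 0
  | 1 => have := hC 1; inferInstanceAs (Module.Finite R (C.X 1 × M))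
  | 2 => have := hC 2; inferInstanceAs (Module.Finite R (C.X 2 × M))
  | n + 3 => hC (n + 3)

end Expansion

section AlignedMap

variable {C D : ChainComplex (ModuleCat.{v} R) ℕ} (f : C ⟶ D) {g : D.X 1 →ₗ[R] C.X 0}
  {s : D.X 1 →ₗ[R] C.X 1} (hs : ∀ y, C.d 1 0 (s y) = -g y) (hg : ∀ y, f.f 0 (g y) = D.d 1 0 y)
  {p : D.X 1 →ₗ[R] D.X 2} (hp : ∀ y, D.d 2 1 (p y) = f.f 1 (s y) + y)

def alignedMap : expansion C g s hs ⟶ expansion D (0 : C.X 1 →ₗ[R] D.X 0) 0 (by simp) where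
  f
    | 0 => f.f 0
    | 1 => ModuleCat.ofHom (((f.f 1).hom.coprod LinearMap.id).prod (LinearMap.fst R _ _))
    | 2 => ModuleCat.ofHom (((f.f 2).hom.coprod p).prod ((C.d 2 1).hom.coprod s))
    | n + 3 => f.f (n + 3)
  comm' := by
    rintro _ n rfl
    rw [expansion_d, expansion_d]
    match n with
    | 0 =>
      ext ⟨x, y⟩
      show D.d 1 0 (f.f 1 x + y) + 0 = f.f 0 (C.d 1 0 x + g y)
      simp [Hom.comm_apply, hg]
    | 1 =>
      ext ⟨x, y⟩
      show ((D.d 2 1 (f.f 2 x + p y) + 0, C.d 2 1 x + s y) : D.X 1 × C.X 1) =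
        (f.f 1 (C.d 2 1 x + s y) + y, C.d 2 1 x + s y)
      simp [Hom.comm_apply, hp, add_assoc]
    | 2 =>
      ext x
      show ((D.d 3 2 (f.f 3 x), 0) : D.X 2 × C.X 1) =
        (f.f 2 (C.d 3 2 x) + p 0, C.d 2 1 (C.d 3 2 x) + s 0)
      simpa using ⟨f.comm_apply 3 2 x, (C.d_comp_d_apply 3 2 1 x).symm⟩
    | n + 3 => exact f.comm (n + 4) (n + 3)

def alignedMapHomotopy : Homotopy (expansionIncl C g s hs ≫ alignedMap f hs hg hp)
    (f ≫ expansionIncl D (0 : C.X 1 →ₗ[R] D.X 0) 0 (by simp)) :=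
  homotopyOfOneTwo (ModuleCat.ofHom (LinearMap.inr R _ _)) rfl
    (by
      ext x
      show ((f.f 1 x + 0, x) : D.X 1 × C.X 1) = (D.d 2 1 0 + 0, x) + (f.f 1 x, 0)
      simp)
    (by
      ext x
      show ((f.f 2 x + p 0, C.d 2 1 x + s 0) : D.X 2 × C.X 1) = (0, C.d 2 1 x) + (f.f 2 x, 0)
      simp)
    (fun _ => rfl)

lemma isIso_alignedMap_f_one : IsIso ((alignedMap f hs hg hp).f 1) := by
  rw [ConcreteCategory.isIso_iff_bijective]
  refine ⟨fun ⟨x, y⟩ ⟨x', y'⟩ h => ?_, fun ⟨u, v⟩ => ⟨(v, u - f.f 1 v), ?_⟩⟩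
  · change ((f.f 1 x + y, x) : D.X 1 × C.X 1) = (f.f 1 x' + y', x') at h
    obtain ⟨h, rfl⟩ := Prod.mk.inj h
    rw [add_left_cancel h]
  · change ((f.f 1 v + (u - f.f 1 v), v) : D.X 1 × C.X 1) = (u, v)
    rw [add_sub_cancel]

end AlignedMap

section Alignment

variable {C D : ChainComplex (ModuleCat.{v} R) ℕ} (f : C ⟶ D) {g : D.X 1 →ₗ[R] C.X 0}
  (hg : ∀ y, f.f 0 (g y) = D.d 1 0 y) (h0 : Function.Injective (homologyMap f 0))
  (h1 : Function.Surjective (homologyMap f 1))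
include hg h0 h1

lemma exists_d_eq_neg_and_d_eq_add (y : D.X 1) :
    ∃ x u, C.d 1 0 x = -g y ∧ D.d 2 1 u = f.f 1 x + y := by
  obtain ⟨x₀, hx₀⟩ := exists_d_eq_of_injective_homologyMap f (i := 1) (ChainComplex.prev ℕ 0)
    ChainComplex.next_nat_zero h0 (x := -g y) (by rw [C.shape 0 0 (by simp)]; rfl)
    (u := -y) (by simp [hg])
  have hcycle : D.d 1 0 (f.f 1 x₀ + y) = 0 := by simp [Hom.comm_apply, hx₀, hg]
  obtain ⟨z, hz, u, hu⟩ := exists_d_eq_sub_of_surjective_homologyMap f (i := 2)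
    (ChainComplex.prev ℕ 1) (ChainComplex.next_nat_succ 0) h1 hcycle
  refine ⟨x₀ - z, -u, by simp [hx₀, hz], ?_⟩
  rw [map_neg, hu, map_sub]
  abel

lemma exists_linearMap_d_eq_neg_and_d_eq_add [Module.Projective R (D.X 1)] :
    ∃ (s : D.X 1 →ₗ[R] C.X 1) (p : D.X 1 →ₗ[R] D.X 2),
      (∀ y, C.d 1 0 (s y) = -g y) ∧ ∀ y, D.d 2 1 (p y) = f.f 1 (s y) + y := by
  let Ψ : C.X 1 × D.X 2 →ₗ[R] C.X 0 × D.X 1 :=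
    ((C.d 1 0).hom ∘ₗ LinearMap.fst R _ _).prod
      ((D.d 2 1).hom ∘ₗ LinearMap.snd R _ _ - (f.f 1).hom ∘ₗ LinearMap.fst R _ _)
  obtain ⟨σ, hσ⟩ := Module.exists_comp_eq_of_range_le Ψ ((-g).prod LinearMap.id) <| by
    rintro _ ⟨y, rfl⟩
    obtain ⟨x, u, hx, hu⟩ := exists_d_eq_neg_and_d_eq_add f hg h0 h1 y
    exact ⟨(x, u), Prod.ext hx (by simp [Ψ, hu])⟩
  refine ⟨LinearMap.fst R _ _ ∘ₗ σ, LinearMap.snd R _ _ ∘ₗ σ,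
    fun y => congrArg Prod.fst (LinearMap.congr_fun hσ y), fun y => ?_⟩
  exact sub_eq_iff_eq_add'.1 (congrArg Prod.snd (LinearMap.congr_fun hσ y))

end Alignment
end ChainComplex

open ChainComplex

/-- Algebraic 1-skeleton alignment (with simple equivalence weakened to chain
homotopy equivalence): given `f₀` an isomorphism, `H₀(f)` bijective, `H₁(f)`
surjective, there are complexes `C'`, `D'` agreeing with `C`, `D` in degree 0 and
degrees `≥ 3`, chain homotopy equivalences `a`, `b` which are isomorphisms in
degree 0 and identities in degrees `≥ 3`, and `f' : C' → D'` with `f'₀`, `f'₁`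
isomorphisms, such that `f' ∘ a` is chain homotopic to `b ∘ f`. -/
theorem statement8 {R : Type*} [Ring R]
    (C D : ChainComplex (ModuleCat R) ℕ) (f : C ⟶ D)
    (hCfree : ∀ n, Module.Free R (C.X n)) (hCfin : ∀ n, Module.Finite R (C.X n))
    (hDfree : ∀ n, Module.Free R (D.X n)) (hDfin : ∀ n, Module.Finite R (D.X n))
    (hf0 : IsIso (f.f 0))
    (h0 : Function.Bijective (HomologicalComplex.homologyMap f 0))
    (h1 : Function.Surjective (HomologicalComplex.homologyMap f 1)) :
    ∃ (C' D' : ChainComplex (ModuleCat R) ℕ)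
      (_ : ∀ n, Module.Free R (C'.X n)) (_ : ∀ n, Module.Finite R (C'.X n))
      (_ : ∀ n, Module.Free R (D'.X n)) (_ : ∀ n, Module.Finite R (D'.X n))
      (_ : C'.X 0 = C.X 0) (hCX : ∀ n, 3 ≤ n → C'.X n = C.X n)
      (_ : D'.X 0 = D.X 0) (hDX : ∀ n, 3 ≤ n → D'.X n = D.X n)
      (a : HomotopyEquiv C C') (b : HomotopyEquiv D D') (f' : C' ⟶ D'),
      IsIso (a.hom.f 0) ∧
      (∀ n (hn : 3 ≤ n), a.hom.f n = eqToHom (hCX n hn).symm) ∧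
      IsIso (b.hom.f 0) ∧
      (∀ n (hn : 3 ≤ n), b.hom.f n = eqToHom (hDX n hn).symm) ∧
      IsIso (f'.f 0) ∧ IsIso (f'.f 1) ∧
      Nonempty (Homotopy (a.hom ≫ f') (f ≫ b.hom)) := by
  have := hCfree 1; have := hDfree 1; have := hCfin 1; have := hDfin 1
  let g : D.X 1 →ₗ[R] C.X 0 := (inv (f.f 0)).hom ∘ₗ (D.d 1 0).hom
  have hg : ∀ y, f.f 0 (g y) = D.d 1 0 y := fun y =>
    ConcreteCategory.congr_hom (IsIso.inv_hom_id (f.f 0)) (D.d 1 0 y)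
  obtain ⟨s, p, hs, hp⟩ := exists_linearMap_d_eq_neg_and_d_eq_add f hg h0.1 h1
  have hz : ∀ x, D.d 1 0 ((0 : C.X 1 →ₗ[R] D.X 1) x) = -(0 : C.X 1 →ₗ[R] D.X 0) x := by simp
  exact ⟨expansion C g s hs, expansion D 0 0 hz,
    expansion_X_free C g s hs hCfree, expansion_X_finite C g s hs hCfin,
    expansion_X_free D 0 0 hz hDfree, expansion_X_finite D 0 0 hz hDfin,
    rfl, fun _ => expansion_X_of_three_le C g s hs, rfl, fun _ => expansion_X_of_three_le D 0 0 hz,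
    expansionHomotopyEquiv C g s hs, expansionHomotopyEquiv D 0 0 hz, alignedMap f hs hg hp,
    inferInstanceAs (IsIso (𝟙 _)), fun _ => expansionIncl_f_of_three_le C g s hs,
    inferInstanceAs (IsIso (𝟙 _)), fun _ => expansionIncl_f_of_three_le D 0 0 hz,
    hf0, isIso_alignedMap_f_one f hs hg hp, ⟨alignedMapHomotopy f hs hg hp⟩⟩
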